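/- Fix an integer b ≥ 1 and n ∈ ℕ. Let x = (x₁,…,xₙ) ∈ [0,1]^n and for each i ∈ [n] let y_i := lim_{t→∞} t·Γ(t x_k : k ∈ [n]∖{i}) ∈ (0,∞] (this limit exists). Then Σ_{i : y_i < ∞} x_i y_i / (1 + x_i y_i) = b if #{i : x_i > 0} > b, and this sum equals 0 if #{i : x_i > 0} ≤ b. -/

import Mathlib

open Finset Filter
open scoped Classical ENNReal

/-!
Let `e_j` be the elementary symmetric functions of `(x_k)_{k ≠ i}`. Then
`t Γ(t x_k : k ≠ i) = t (Σ_{j<b} e_j t^j) / (Σ_{j≤b} e_j t^j)`, and `e_j > 0` exactly for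
`j ≤ m_i := #{k ≠ i : x_k > 0}`. If `b ≤ m_i`, comparing leading coefficients gives the finite
limit `y_i = e_{b-1} / e_b`; otherwise `e_b = 0`, the two sums coincide and `t Γ = t → ∞`.

If `#{x_k > 0} > b`, every `y_i` is finite, and since `e_b(x) = e_b(x_{-i}) + x_i e_{b-1}(x_{-i})`,
`x_i y_i / (1 + x_i y_i) = x_i e_{b-1}(x_{-i}) / e_b(x)`; these sum to `b` by the double count
`Σ_i x_i e_{b-1}(x_{-i}) = b e_b(x)`. If `#{x_k > 0} ≤ b`, a finite `y_i` forces `x_i = 0`.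
-/

/-- The `b`-matching cavity ratio
`Γ(x) = (Σ_{|I| ≤ b−1} ∏_{i∈I} x_i) / (Σ_{|I| ≤ b} ∏_{i∈I} x_i)`
(the term for `I = ∅` equals `1`, so the denominator is positive for nonnegative `x`). -/
noncomputable def bGamma (b : ℕ) {ι : Type*} [Fintype ι] [DecidableEq ι] (x : ι → ℝ) : ℝ :=
  (∑ I ∈ Finset.univ.filter (fun I : Finset ι => I.card ≤ b - 1), ∏ i ∈ I, x i) /
  (∑ I ∈ Finset.univ.filter (fun I : Finset ι => I.card ≤ b), ∏ i ∈ I, x i)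

theorem Multiset.esymm_cons_succ {R : Type*} [CommSemiring R] (a : R) (s : Multiset R) (k : ℕ) :
    (a ::ₘ s).esymm (k + 1) = s.esymm (k + 1) + a * s.esymm k := by
  simp [Multiset.esymm, Multiset.powersetCard_cons, Multiset.map_map, Multiset.sum_map_mul_left]

section Esymm

variable {ι : Type*}

theorem esymm_map_val_eq_erase_add [DecidableEq ι] {R : Type*} [CommSemiring R] {s : Finset ι}
    {i : ι} (hi : i ∈ s) (f : ι → R) (k : ℕ) :
    (s.val.map f).esymm (k + 1) =
      ((s.erase i).val.map f).esymm (k + 1) + f i * ((s.erase i).val.map f).esymm k := by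
  rw [← Multiset.esymm_cons_succ, ← Multiset.map_cons, erase_val, Multiset.cons_erase hi]

theorem sum_mul_esymm_erase [DecidableEq ι] {R : Type*} [CommSemiring R] (s : Finset ι)
    (f : ι → R) (j : ℕ) :
    ∑ i ∈ s, f i * ((s.erase i).val.map f).esymm j = (j + 1) * (s.val.map f).esymm (j + 1) := by
  simp_rw [esymm_map_val, mul_sum]
  calc ∑ i ∈ s, ∑ I ∈ (s.erase i).powersetCard j, f i * ∏ k ∈ I, f k
      = ∑ i ∈ s, ∑ J ∈ (s.powersetCard (j + 1)).filter (i ∈ ·), ∏ k ∈ J, f k := by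
        refine sum_congr rfl fun i hi => ?_
        have hiI : ∀ I ∈ (s.erase i).powersetCard j, i ∉ I := fun I hI h => by
          simpa using (mem_powersetCard.1 hI).1 h
        refine sum_nbij' (insert i) (erase · i) (fun I hI => ?_) (fun J hJ => ?_)
          (fun I hI => erase_insert (hiI I hI)) (fun J hJ => insert_erase (mem_filter.1 hJ).2)
          (fun I hI => by rw [prod_insert (hiI I hI)])
        · obtain ⟨hIs, hIj⟩ := mem_powersetCard.1 hI
          simp only [mem_filter, mem_powersetCard, mem_insert_self, and_true]
          exact ⟨insert_subset hi (hIs.trans (erase_subset i s)), by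
            rw [card_insert_of_notMem (hiI I hI), hIj]⟩
        · obtain ⟨hJ, hiJ⟩ := mem_filter.1 hJ
          obtain ⟨hJs, hJj⟩ := mem_powersetCard.1 hJ
          exact mem_powersetCard.2
            ⟨erase_subset_erase i hJs, by simp [card_erase_of_mem hiJ, hJj]⟩
    _ = ∑ J ∈ s.powersetCard (j + 1), ∑ i ∈ J, ∏ k ∈ J, f k :=
        sum_comm' fun i J => by
          simp only [mem_filter]
          exact ⟨fun h => h.2.symm, fun h => ⟨(mem_powersetCard.1 h.2).1 h.1, h.symm⟩⟩
    _ = _ := by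
        simp only [sum_const]
        refine sum_congr rfl fun J hJ => ?_
        rw [(mem_powersetCard.1 hJ).2, nsmul_eq_mul]
        push_cast
        ring

variable {s : Finset ι} {f : ι → ℝ}

theorem esymm_map_val_nonneg (hf : ∀ k ∈ s, 0 ≤ f k) (j : ℕ) :
    0 ≤ (s.val.map f).esymm j := by
  rw [esymm_map_val]
  exact sum_nonneg fun I hI => prod_nonneg fun k hk => hf k ((mem_powersetCard.1 hI).1 hk)

theorem esymm_map_val_pos (hf : ∀ k ∈ s, 0 ≤ f k) {j : ℕ}
    (hj : j ≤ #{k ∈ s | 0 < f k}) : 0 < (s.val.map f).esymm j := by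
  rw [esymm_map_val]
  obtain ⟨I, hIpos, hIj⟩ := exists_subset_card_eq hj
  have hIs : I ⊆ s := hIpos.trans (filter_subset _ s)
  refine sum_pos' (fun J hJ => prod_nonneg fun k hk => hf k ((mem_powersetCard.1 hJ).1 hk))
    ⟨I, mem_powersetCard.2 ⟨hIs, hIj⟩, prod_pos fun k hk => (mem_filter.1 (hIpos hk)).2⟩

theorem esymm_map_val_eq_zero (hf : ∀ k ∈ s, 0 ≤ f k) {j : ℕ}
    (hj : #{k ∈ s | 0 < f k} < j) : (s.val.map f).esymm j = 0 := by
  rw [esymm_map_val]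
  refine sum_eq_zero fun I hI => ?_
  obtain ⟨hIs, rfl⟩ := mem_powersetCard.1 hI
  obtain ⟨k, hkI, hk⟩ : ∃ k ∈ I, ¬0 < f k := by
    by_contra! hpos
    exact hj.not_ge (card_le_card fun k hk => mem_filter.2 ⟨hIs hk, hpos k hk⟩)
  exact prod_eq_zero hkI (le_antisymm (not_lt.1 hk) (hf k (hIs hkI)))

end Esymm

section Asymptotics

theorem tendsto_sum_range_mul_pow_div_pow (c : ℕ → ℝ) (d : ℕ) :
    Tendsto (fun t : ℝ => (∑ j ∈ range (d + 1), c j * t ^ j) / t ^ d) atTop (nhds (c d)) := by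
  induction d with
  | zero => simp
  | succ d ih =>
    have h := (ih.mul tendsto_inv_atTop_zero).add_const (c (d + 1))
    rw [mul_zero, zero_add] at h
    refine h.congr' ?_
    filter_upwards [eventually_ne_atTop 0] with t ht
    rw [sum_range_succ _ (d + 1)]
    field_simp
    ring

variable (e : ℕ → ℝ) {b : ℕ}

theorem tendsto_mul_sum_range_div_sum_range (hb : 1 ≤ b) (he : e b ≠ 0) :
    Tendsto
      (fun t : ℝ => t * ((∑ j ∈ range b, e j * t ^ j) / ∑ j ∈ range (b + 1), e j * t ^ j))
      atTop (nhds (e (b - 1) / e b)) := by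
  obtain ⟨d, rfl⟩ := Nat.exists_eq_add_of_le' hb
  rw [Nat.add_sub_cancel]
  refine ((tendsto_sum_range_mul_pow_div_pow e d).div
    (tendsto_sum_range_mul_pow_div_pow e (d + 1)) he).congr' ?_
  filter_upwards [eventually_ne_atTop 0] with t ht
  simp only [Pi.div_apply]
  field_simp
  ring

theorem mul_sum_range_div_sum_range_of_eq_zero (hb : 1 ≤ b) (he : ∀ j, 0 ≤ e j)
    (he0 : 0 < e 0) (heb : e b = 0) {t : ℝ} (ht : 0 ≤ t) :
    t * ((∑ j ∈ range b, e j * t ^ j) / ∑ j ∈ range (b + 1), e j * t ^ j) = t := by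
  have hpos : 0 < ∑ j ∈ range b, e j * t ^ j :=
    sum_pos' (fun j _ => mul_nonneg (he j) (pow_nonneg ht j)) ⟨0, mem_range.2 hb, by simpa⟩
  rw [sum_range_succ, heb, zero_mul, add_zero, div_self hpos.ne', mul_one]

end Asymptotics

section Cavity

variable {ι : Type*} [Fintype ι] {b : ℕ}

theorem sum_card_le_prod_const_mul (f : ι → ℝ) (t : ℝ) (c : ℕ) :
    ∑ I ∈ univ.filter (fun I : Finset ι => I.card ≤ c), ∏ k ∈ I, t * f k =
      ∑ j ∈ range (c + 1), (univ.val.map f).esymm j * t ^ j := by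
  rw [← sum_fiberwise_of_maps_to (g := card) (t := range (c + 1))
    fun I hI => by simpa [Nat.lt_succ_iff] using hI]
  refine sum_congr rfl fun j hj => ?_
  have hfiber : {I ∈ univ.filter (fun I : Finset ι => I.card ≤ c) | I.card = j} =
      powersetCard j univ := by
    ext I
    simp only [mem_filter, mem_univ, true_and, mem_powersetCard, subset_univ]
    have := mem_range.1 hj
    omega
  rw [esymm_map_val, sum_mul]
  refine sum_congr hfiber fun I hI => ?_
  rw [prod_mul_distrib, prod_const, (mem_powersetCard.1 hI).2, mul_comm]

variable [DecidableEq ι]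

theorem bGamma_const_mul (hb : 1 ≤ b) (f : ι → ℝ) (t : ℝ) :
    bGamma b (fun k => t * f k) =
      (∑ j ∈ range b, (univ.val.map f).esymm j * t ^ j) /
        ∑ j ∈ range (b + 1), (univ.val.map f).esymm j * t ^ j := by
  rw [bGamma, sum_card_le_prod_const_mul, sum_card_le_prod_const_mul, Nat.sub_add_cancel hb]

theorem map_univ_val_subtype_ne {R : Type*} (x : ι → R) (i : ι) :
    (univ : Finset {k // k ≠ i}).val.map (fun k => x k.1) = (univ.erase i).val.map x := by
  rw [← filter_ne', ← subtype_map, map_val, Multiset.map_map, subtype_univ]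
  rfl

noncomputable def cavityLimit (b : ℕ) (x : ι → ℝ) (i : ι) : ℝ :=
  ((univ.erase i).val.map x).esymm (b - 1) / ((univ.erase i).val.map x).esymm b

variable {x : ι → ℝ}

theorem mul_bGamma_erase_eq (hb : 1 ≤ b) (i : ι) (t : ℝ) :
    t * bGamma b (fun k : {k // k ≠ i} => t * x k.1) =
      t * ((∑ j ∈ range b, ((univ.erase i).val.map x).esymm j * t ^ j) /
        ∑ j ∈ range (b + 1), ((univ.erase i).val.map x).esymm j * t ^ j) := by
  rw [bGamma_const_mul hb, map_univ_val_subtype_ne]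

theorem tendsto_mul_bGamma_erase_of_le (hb : 1 ≤ b) (hx : ∀ k, 0 ≤ x k) {i : ι}
    (hi : b ≤ #{k ∈ univ.erase i | 0 < x k}) :
    Tendsto (fun t : ℝ => t * bGamma b (fun k : {k // k ≠ i} => t * x k.1)) atTop
      (nhds (cavityLimit b x i)) := by
  simp_rw [mul_bGamma_erase_eq hb]
  exact tendsto_mul_sum_range_div_sum_range _ hb (esymm_map_val_pos (fun k _ => hx k) hi).ne'

theorem tendsto_mul_bGamma_erase_of_lt (hb : 1 ≤ b) (hx : ∀ k, 0 ≤ x k) {i : ι}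
    (hi : #{k ∈ univ.erase i | 0 < x k} < b) :
    Tendsto (fun t : ℝ => t * bGamma b (fun k : {k // k ≠ i} => t * x k.1)) atTop atTop := by
  simp_rw [mul_bGamma_erase_eq hb]
  refine tendsto_id.congr' ?_
  filter_upwards [eventually_ge_atTop 0] with t ht
  exact (mul_sum_range_div_sum_range_of_eq_zero _ hb (esymm_map_val_nonneg fun k _ => hx k)
    (by simp [Multiset.esymm]) (esymm_map_val_eq_zero (fun k _ => hx k) hi) ht).symm

theorem cavityLimit_pos (hb : 1 ≤ b) (hx : ∀ k, 0 ≤ x k) {i : ι}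
    (hi : b ≤ #{k ∈ univ.erase i | 0 < x k}) : 0 < cavityLimit b x i :=
  div_pos (esymm_map_val_pos (fun k _ => hx k) (by omega))
    (esymm_map_val_pos (fun k _ => hx k) hi)

theorem le_card_filter_erase_of_lt (hM : b < #{k | 0 < x k}) (i : ι) :
    b ≤ #{k ∈ univ.erase i | 0 < x k} := by
  have := pred_card_le_card_erase (s := {k | 0 < x k}) (a := i)
  rw [← filter_erase] at this
  omega

theorem eq_zero_of_le_card_filter_erase (hx : ∀ k, 0 ≤ x k) (hM : #{k | 0 < x k} ≤ b) {i : ι}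
    (hi : b ≤ #{k ∈ univ.erase i | 0 < x k}) : x i = 0 := by
  refine le_antisymm (not_lt.1 fun hxi => ?_) (hx i)
  have hmem : i ∈ ({k | 0 < x k} : Finset ι) := mem_filter.2 ⟨mem_univ i, hxi⟩
  have hpos := card_pos.2 ⟨i, hmem⟩
  rw [filter_erase, card_erase_of_mem hmem] at hi
  omega

theorem sum_mul_cavityLimit_div (hb : 1 ≤ b) (hx : ∀ k, 0 ≤ x k) (hM : b < #{k | 0 < x k}) :
    ∑ i, x i * cavityLimit b x i / (1 + x i * cavityLimit b x i) = b := by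
  obtain ⟨d, rfl⟩ := Nat.exists_eq_add_of_le' hb
  have hterm : ∀ i, x i * cavityLimit (d + 1) x i / (1 + x i * cavityLimit (d + 1) x i) =
      x i * ((univ.erase i).val.map x).esymm d / (univ.val.map x).esymm (d + 1) := by
    intro i
    have hpos := esymm_map_val_pos (fun k _ => hx k) (le_card_filter_erase_of_lt hM i)
    rw [cavityLimit, Nat.add_sub_cancel, esymm_map_val_eq_erase_add (mem_univ i)]
    field_simp
  have htotal : 0 < (univ.val.map x).esymm (d + 1) :=
    esymm_map_val_pos (fun k _ => hx k) hM.le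
  rw [sum_congr rfl fun i _ => hterm i, ← sum_div, sum_mul_esymm_erase,
    mul_div_cancel_right₀ _ htotal.ne']
  push_cast
  ring

end Cavity

/-- for `x ∈ [0,1]^n`, with `y_i = lim_{t→∞} t Γ(t x_k : k ≠ i) ∈ (0,∞]`
(these limits exist), one has `Σ_{i : y_i < ∞} x_i y_i/(1 + x_i y_i) = b` if
`#{i : x_i > 0} > b`, and `= 0` otherwise. -/
theorem stmt19 (b : ℕ) (hb : 1 ≤ b) (n : ℕ) (x : Fin n → ℝ)
    (hx : ∀ i, x i ∈ Set.Icc (0 : ℝ) 1) :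
    ∃ y : Fin n → ℝ≥0∞,
      (∀ i : Fin n,
        Tendsto (fun t : ℝ =>
            ENNReal.ofReal (t * bGamma b (fun k : {k : Fin n // k ≠ i} => t * x k.1)))
          atTop (nhds (y i))) ∧
      (∀ i, 0 < y i) ∧
      (∑ i ∈ Finset.univ.filter (fun i => y i ≠ ⊤),
          x i * (y i).toReal / (1 + x i * (y i).toReal) =
        if b < (Finset.univ.filter (fun i => 0 < x i)).card then (b : ℝ) else 0) := by
  have hx0 : ∀ i, 0 ≤ x i := fun i => (hx i).1
  refine ⟨fun i => if b ≤ #{k ∈ univ.erase i | 0 < x k}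
    then ENNReal.ofReal (cavityLimit b x i) else ⊤, fun i => ?_, fun i => ?_, ?_⟩
  · dsimp only
    split_ifs with hi
    · exact (ENNReal.continuous_ofReal.tendsto _).comp (tendsto_mul_bGamma_erase_of_le hb hx0 hi)
    · exact ENNReal.tendsto_ofReal_atTop.comp
        (tendsto_mul_bGamma_erase_of_lt hb hx0 (not_le.1 hi))
  · dsimp only
    split_ifs with hi
    · exact ENNReal.ofReal_pos.2 (cavityLimit_pos hb hx0 hi)
    · exact ENNReal.zero_lt_top
  · split_ifs with hM
    · rw [filter_true_of_mem fun i _ => by simp [le_card_filter_erase_of_lt hM i]]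
      simp only [le_card_filter_erase_of_lt hM, if_true,
        ENNReal.toReal_ofReal (cavityLimit_pos hb hx0 (le_card_filter_erase_of_lt hM _)).le]
      exact sum_mul_cavityLimit_div hb hx0 hM
    · refine sum_eq_zero fun i hi => ?_
      have hfin : b ≤ #{k ∈ univ.erase i | 0 < x k} := by
        by_contra h
        simp [h] at hi
      simp [eq_zero_of_le_card_filter_erase hx0 (not_lt.1 hM) hfin]
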